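/- Suppose a multilinear polynomial f over ZMod r contains a variable x appearing in exactly two terms, both of the form (r/2)·x·x₀ and (r/2)·x·x₁ with r even. Then for any r-th root of unity ω and any function g not depending on x, Σ_{x,x₀,x₁∈{0,1}} ω^{(r/2)x x₀ + (r/2)x x₁ + g(x₀,x₁)} = 2 · Σ_{x₀∈{0,1}} ω^{g(x₀,x₀)}; i.e., summing over x forces x₀ = x₁ and contributes a factor of 2. -/

import Mathlib

theorem stmt_13 (r : ℕ) (hr : 0 < r) (hre : Even r) (ω : ℂ) (hω : IsPrimitiveRoot ω r)
    (g : Fin 2 → Fin 2 → ZMod r) :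
    ∑ x : Fin 2, ∑ x₀ : Fin 2, ∑ x₁ : Fin 2,
        ω ^ ((((r / 2) * x.val * x₀.val + (r / 2) * x.val * x₁.val : ℕ) : ZMod r) + g x₀ x₁).val =
      2 * ∑ x₀ : Fin 2, ω ^ (g x₀ x₀).val := by
  haveI : NeZero r := ⟨hr.ne'⟩
  have h1 : ω ^ r = 1 := hω.pow_eq_one
  have key : ∀ (n : ℕ) (v : ZMod r), ω ^ (((n : ZMod r) + v).val) = ω ^ n * ω ^ v.val := by
    intro n v
    have : ((n : ZMod r) + v) = ((n + v.val : ℕ) : ZMod r) := by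
      push_cast [ZMod.natCast_val, ZMod.cast_id]; ring
    rw [this, ZMod.val_natCast, ← pow_eq_pow_mod _ h1, pow_add]
  have h2 : ω ^ (r / 2) = -1 := by
    have hsq : (ω ^ (r / 2)) ^ 2 = 1 := by
      rw [← pow_mul, Nat.div_mul_cancel hre.two_dvd, h1]
    rcases sq_eq_one_iff.mp hsq with h | h
    · exfalso
      have hlt : r / 2 < r := Nat.div_lt_self hr one_lt_two
      have hpos : 0 < r / 2 := Nat.div_pos (by obtain ⟨k, hk⟩ := hre; omega) two_pos
      exact hω.pow_ne_one_of_pos_of_lt hpos.ne' hlt h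
    · exact h
  have hrr : ω ^ (r / 2 + r / 2) = 1 := by
    rw [pow_add, h2]; ring
  simp only [Fin.sum_univ_two, Fin.val_zero, Fin.val_one, key]
  simp only [Nat.mul_zero, Nat.zero_mul, Nat.mul_one, Nat.one_mul, Nat.add_zero, Nat.zero_add,
    pow_zero, one_mul, h2, hrr]
  ring
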